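/- Let D, D' ∈ H⁴ be such that there exist g, g' ∈ SO(3) and real numbers λ₁, λ₂, λ₃ and λ'₁, λ'₂, λ'₃ with g·D = NF_orth(λ₁, λ₂, λ₃) and g'·D' = NF_orth(λ'₁, λ'₂, λ'₃), and suppose both D and D' satisfy 6J₆ − 9J₂J₄ − 20J₃² + 3J₂³ ≠ 0. If Jₖ(D) = Jₖ(D') for k = 2, 3, 4, 5, 6, 7, then there exists h ∈ SO(3) with D' = h·D. (The invariants J₂, …, J₇ separate the orbits inside the orthotropic class.) -/

import Mathlib

open Matrix BigOperators

abbrev Mat3 := Matrix (Fin 3) (Fin 3) ℝ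
abbrev T4 := Fin 3 → Fin 3 → Fin 3 → Fin 3 → ℝ

/-- `g ∈ SO(3)`: real orthogonal 3×3 matrix of determinant 1. -/
def IsSO3 (g : Mat3) : Prop := g * gᵀ = 1 ∧ g.det = 1

/-- A harmonic fourth-order tensor: totally symmetric and traceless. -/
def IsHarm (D : T4) : Prop :=
  (∀ i j k l, D i j k l = D j i k l) ∧
  (∀ i j k l, D i j k l = D i k j l) ∧
  (∀ i j k l, D i j k l = D i j l k) ∧
  (∀ i j, ∑ k, D k k i j = 0)

/-- The action of a rotation `g` on a fourth-order tensor. -/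
noncomputable def act (g : Mat3) (D : T4) : T4 := fun i j k l =>
  ∑ p, ∑ q, ∑ r, ∑ s, g i p * g j q * g k r * g l s * D p q r s

/-- `D²`, the square of a fourth-order tensor. -/
noncomputable def sqT (D : T4) : T4 := fun i j k l => ∑ p, ∑ q, D i j p q * D p q k l

/-- `D³`, the cube of a fourth-order tensor. -/
noncomputable def cbT (D : T4) : T4 := fun i j k l => ∑ p, ∑ q, sqT D i j p q * D p q k l

/-- The second-order Boehler covariant `d₂(D) j l = ∑ᵢ (D²) i j i l`. -/
noncomputable def d2 (D : T4) : Mat3 := Matrix.of fun j l => ∑ i, sqT D i j i l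

/-- The second-order covariant `d₃(D) j l = ∑ᵢ (D³) i j i l`. -/
noncomputable def d3 (D : T4) : Mat3 := Matrix.of fun j l => ∑ i, cbT D i j i l

/-- Fundamental invariant `J₂ = tr d₂`. -/
noncomputable def J2 (D : T4) : ℝ := (d2 D).trace
/-- Fundamental invariant `J₃ = tr d₃`. -/
noncomputable def J3 (D : T4) : ℝ := (d3 D).trace
/-- Fundamental invariant `J₄ = tr(d₂²)`. -/
noncomputable def J4 (D : T4) : ℝ := (d2 D * d2 D).trace
/-- Fundamental invariant `J₅ = ∑ (d₂)ᵢⱼ D i j k l (d₂)ₖₗ`. -/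
noncomputable def J5 (D : T4) : ℝ :=
  ∑ i, ∑ j, ∑ k, ∑ l, d2 D i j * D i j k l * d2 D k l
/-- Fundamental invariant `J₆ = tr(d₂³)`. -/
noncomputable def J6 (D : T4) : ℝ := (d2 D * d2 D * d2 D).trace
/-- Fundamental invariant `J₇ = ∑ (d₂²)ᵢⱼ D i j k l (d₂)ₖₗ`. -/
noncomputable def J7 (D : T4) : ℝ :=
  ∑ i, ∑ j, ∑ k, ∑ l, (d2 D * d2 D) i j * D i j k l * d2 D k l
/-- Fundamental invariant `J₈ = ∑ (d₂²)ᵢⱼ (D²) i j k l (d₂)ₖₗ`. -/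
noncomputable def J8 (D : T4) : ℝ :=
  ∑ i, ∑ j, ∑ k, ∑ l, (d2 D * d2 D) i j * sqT D i j k l * d2 D k l
/-- Fundamental invariant `J₉ = ∑ (d₂²)ᵢⱼ D i j k l (d₂²)ₖₗ`. -/
noncomputable def J9 (D : T4) : ℝ :=
  ∑ i, ∑ j, ∑ k, ∑ l, (d2 D * d2 D) i j * D i j k l * (d2 D * d2 D) k l
/-- Fundamental invariant `J₁₀ = ∑ (d₂²)ᵢⱼ (D²) i j k l (d₂²)ₖₗ`. -/
noncomputable def J10 (D : T4) : ℝ :=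
  ∑ i, ∑ j, ∑ k, ∑ l, (d2 D * d2 D) i j * sqT D i j k l * (d2 D * d2 D) k l

/-- The totally symmetric tensor whose value at `(i,j,k,l)` depends only on the
multiset of indices `{i,j,k,l}`. -/
noncomputable def symT (f : Multiset (Fin 3) → ℝ) : T4 := fun i j k l => f {i, j, k, l}

/-- Normal form of a cubic (`[𝕆]`) tensor in `H⁴` with parameter `δ`
(indices `0,1,2` correspond to `1,2,3`). -/
noncomputable def NFcubic (δ : ℝ) : T4 := symT fun m =>
  if m = {0, 0, 0, 0} ∨ m = {1, 1, 1, 1} ∨ m = {2, 2, 2, 2} then 8 * δ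
  else if m = {0, 0, 1, 1} ∨ m = {0, 0, 2, 2} ∨ m = {1, 1, 2, 2} then -(4 * δ)
  else 0

/-- Normal form of a transversely isotropic (`[O(2)]`) tensor in `H⁴` with parameter `δ`. -/
noncomputable def NFti (δ : ℝ) : T4 := symT fun m =>
  if m = {0, 0, 0, 0} ∨ m = {1, 1, 1, 1} then 3 * δ
  else if m = {2, 2, 2, 2} then 8 * δ
  else if m = {0, 0, 1, 1} then δ
  else if m = {0, 0, 2, 2} ∨ m = {1, 1, 2, 2} then -(4 * δ)
  else 0

/-- Normal form of a trigonal (`[𝔻₃]`) tensor in `H⁴` with parameters `δ, σ`. -/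
noncomputable def NFtrig (δ σ : ℝ) : T4 := symT fun m =>
  if m = {0, 0, 0, 0} ∨ m = {1, 1, 1, 1} then 3 * δ
  else if m = {2, 2, 2, 2} then 8 * δ
  else if m = {0, 0, 1, 1} then δ
  else if m = {0, 0, 2, 2} ∨ m = {1, 1, 2, 2} then -(4 * δ)
  else if m = {0, 0, 1, 2} then -σ
  else if m = {1, 1, 1, 2} then σ
  else 0

/-- Normal form of a tetragonal (`[𝔻₄]`) tensor in `H⁴` with parameters `δ, σ`. -/
noncomputable def NFtetra (δ σ : ℝ) : T4 := symT fun m =>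
  if m = {0, 0, 0, 0} ∨ m = {1, 1, 1, 1} then 3 * δ - σ
  else if m = {2, 2, 2, 2} then 8 * δ
  else if m = {0, 0, 1, 1} then δ + σ
  else if m = {0, 0, 2, 2} ∨ m = {1, 1, 2, 2} then -(4 * δ)
  else 0

/-- Normal form of an orthotropic (`[𝔻₂]`) tensor in `H⁴` with parameters `λ₁, λ₂, λ₃`. -/
noncomputable def NForth (l1 l2 l3 : ℝ) : T4 := symT fun m =>
  if m = {0, 0, 0, 0} then -l2 - l3
  else if m = {1, 1, 1, 1} then -l1 - l3
  else if m = {2, 2, 2, 2} then -l1 - l2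
  else if m = {0, 0, 1, 1} then l3
  else if m = {0, 0, 2, 2} then l2
  else if m = {1, 1, 2, 2} then l1
  else 0

/-!
On the normal form `NF_orth(λ)`, `d₂` is diagonal and every `Jₖ` is an explicit symmetric
polynomial in `λ = (λ₁, λ₂, λ₃)`. With `σ₁, σ₂, σ₃` the elementary symmetric functions of `λ` and
`Δ = (λ₁ - λ₂)(λ₁ - λ₃)(λ₂ - λ₃)`, one finds `J₂ = 8σ₁² - 14σ₂`, `J₃ = 24σ₃ - 6σ₁σ₂`,
`6J₆ - 9J₂J₄ - 20J₃² + 3J₂³ = 432Δ²` and `J₂²J₃ + 3J₂J₅ - 3J₃J₄ - 3J₇ = 96σ₁Δ²`.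
So when `Δ ≠ 0` the invariants determine `σ₁, σ₂, σ₃`, hence `λ` up to a permutation, and every
permutation of `λ` is induced by a rotation permuting the coordinate axes.
-/

open scoped Kronecker

section Conj

variable {n R : Type*} [Fintype n] [DecidableEq n] [CommRing R] {g : Matrix n n R}

theorem trace_conj (hg : gᵀ * g = 1) (A : Matrix n n R) : (g * A * gᵀ).trace = A.trace := by
  rw [trace_mul_cycle, hg, Matrix.one_mul]

theorem conj_mul_conj (hg : gᵀ * g = 1) (A B : Matrix n n R) :
    g * A * gᵀ * (g * B * gᵀ) = g * (A * B) * gᵀ := by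
  calc g * A * gᵀ * (g * B * gᵀ) = g * A * (gᵀ * g) * B * gᵀ := by
        simp only [Matrix.mul_assoc]
    _ = g * (A * B) * gᵀ := by rw [hg, Matrix.mul_one, Matrix.mul_assoc g A B]

theorem mulVec_dotProduct_conj_mulVec (hg : gᵀ * g = 1) (A : Matrix n n R) (v w : n → R) :
    (g *ᵥ v) ⬝ᵥ ((g * A * gᵀ) *ᵥ (g *ᵥ w)) = v ⬝ᵥ (A *ᵥ w) := by
  rw [mulVec_mulVec, Matrix.mul_assoc, Matrix.mul_assoc, hg, Matrix.mul_one,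
    ← mulVec_mulVec, dotProduct_mulVec, ← mulVec_transpose,
    mulVec_mulVec, hg, one_mulVec]

theorem kronecker_self_transpose_mul_self (hg : gᵀ * g = 1) :
    (g ⊗ₖ g)ᵀ * (g ⊗ₖ g) = 1 := by
  rw [← kroneckerMap_transpose, ← mul_kronecker_mul, hg, one_kronecker_one]

end Conj

theorem IsSO3.transpose_mul_self {g : Mat3} (hg : IsSO3 g) : gᵀ * g = 1 :=
  mul_eq_one_comm.mp hg.1

theorem isSO3_one : IsSO3 1 := ⟨by simp, by simp⟩

theorem IsSO3.mul {a b : Mat3} (ha : IsSO3 a) (hb : IsSO3 b) : IsSO3 (a * b) := by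
  refine ⟨?_, by rw [det_mul, ha.2, hb.2, one_mul]⟩
  rw [Matrix.transpose_mul, show a * b * (bᵀ * aᵀ) = a * (b * bᵀ) * aᵀ by
    simp only [Matrix.mul_assoc], hb.1, Matrix.mul_one, ha.1]

theorem IsSO3.transpose {g : Mat3} (hg : IsSO3 g) : IsSO3 gᵀ :=
  ⟨by rw [transpose_transpose, hg.transpose_mul_self], by rw [det_transpose, hg.2]⟩

def contract (S T : T4) : T4 := fun i j k l => ∑ p, ∑ q, S i j p q * T p q k l

def partialTrace (S : T4) : Mat3 := Matrix.of fun j l => ∑ i, S i j i l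

theorem d2_eq_partialTrace_contract (D : T4) : d2 D = partialTrace (contract D D) := rfl

theorem d3_eq_partialTrace_contract (D : T4) :
    d3 D = partialTrace (contract (contract D D) D) := rfl

/-- Index pairs are ordered as in `Matrix.vec` (column-major), to match `kronecker_mulVec_vec`. -/
def flat (D : T4) : Matrix (Fin 3 × Fin 3) (Fin 3 × Fin 3) ℝ :=
  Matrix.of fun x y => D x.2 x.1 y.2 y.1

theorem flat_injective : Function.Injective flat := fun _ _ h => by
  funext i j k l
  exact congrFun (congrFun h (j, i)) (l, k)

theorem flat_act (g : Mat3) (D : T4) : flat (act g D) = g ⊗ₖ g * flat D * (g ⊗ₖ g)ᵀ := by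
  ext ⟨i, j⟩ ⟨k, l⟩
  simp only [flat, act, of_apply, mul_apply, kroneckerMap_apply,
    transpose_apply, Fintype.sum_prod_type, Fin.sum_univ_three]
  ring

theorem flat_contract (S T : T4) : flat (contract S T) = flat S * flat T := by
  ext ⟨i, j⟩ ⟨k, l⟩
  simp only [flat, contract, mul_apply, of_apply, Fintype.sum_prod_type]
  exact Finset.sum_comm

theorem sum_mul_mul_eq_vec_dotProduct (P Q : Mat3) (D : T4) :
    ∑ i, ∑ j, ∑ k, ∑ l, P i j * D i j k l * Q k l = vec P ⬝ᵥ (flat D *ᵥ vec Q) := by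
  simp only [vec, flat, dotProduct, mulVec, of_apply,
    Fintype.sum_prod_type, Finset.mul_sum, mul_assoc]
  rw [Finset.sum_comm]
  exact Finset.sum_congr rfl fun _ _ => Finset.sum_congr rfl fun _ _ => Finset.sum_comm

theorem act_one (D : T4) : act 1 D = D :=
  flat_injective (by rw [flat_act, one_kronecker_one]; simp)

theorem act_mul (a b : Mat3) (D : T4) : act (a * b) D = act a (act b D) :=
  flat_injective (by
    rw [flat_act, flat_act, flat_act, mul_kronecker_mul, Matrix.transpose_mul]
    simp only [Matrix.mul_assoc])

theorem act_apply_eq_conj (g : Mat3) (S : T4) (j l p r : Fin 3) :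
    act g S p j r l =
      (g * Matrix.of (fun a c => ∑ b, ∑ d, g j b * g l d * S a b c d) * gᵀ) p r := by
  simp only [act, mul_apply, of_apply, transpose_apply, Fin.sum_univ_three]
  ring

section Orthogonal

variable {g : Mat3} (hg : gᵀ * g = 1)
include hg

theorem contract_act (S T : T4) : contract (act g S) (act g T) = act g (contract S T) :=
  flat_injective (by
    rw [flat_contract, flat_act, flat_act, flat_act, flat_contract,
      conj_mul_conj (kronecker_self_transpose_mul_self hg)])

theorem partialTrace_act (S : T4) : partialTrace (act g S) = g * partialTrace S * gᵀ := by
  ext j l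
  calc partialTrace (act g S) j l
      = (g * Matrix.of (fun a c => ∑ b, ∑ d, g j b * g l d * S a b c d) * gᵀ).trace := by
        simp only [partialTrace, of_apply, trace, diag, act_apply_eq_conj]
    _ = (g * partialTrace S * gᵀ) j l := by
        rw [trace_conj hg]
        simp only [partialTrace, trace, diag_apply, of_apply, mul_apply,
          transpose_apply, Fin.sum_univ_three]
        ring

theorem sum_conj_mul_act_mul_conj (P Q : Mat3) (D : T4) :
    ∑ i, ∑ j, ∑ k, ∑ l, (g * P * gᵀ) i j * act g D i j k l * (g * Q * gᵀ) k l
      = ∑ i, ∑ j, ∑ k, ∑ l, P i j * D i j k l * Q k l := by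
  rw [sum_mul_mul_eq_vec_dotProduct, sum_mul_mul_eq_vec_dotProduct,
    ← kronecker_mulVec_vec, ← kronecker_mulVec_vec, flat_act,
    mulVec_dotProduct_conj_mulVec (kronecker_self_transpose_mul_self hg)]

theorem d2_act (D : T4) : d2 (act g D) = g * d2 D * gᵀ := by
  rw [d2_eq_partialTrace_contract, contract_act hg, partialTrace_act hg,
    d2_eq_partialTrace_contract]

theorem J2_act (D : T4) : J2 (act g D) = J2 D := by
  rw [J2, J2, d2_act hg, trace_conj hg]

theorem J3_act (D : T4) : J3 (act g D) = J3 D := by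
  rw [J3, J3, d3_eq_partialTrace_contract, contract_act hg, contract_act hg, partialTrace_act hg,
    trace_conj hg, d3_eq_partialTrace_contract]

theorem J4_act (D : T4) : J4 (act g D) = J4 D := by
  rw [J4, J4, d2_act hg, conj_mul_conj hg, trace_conj hg]

theorem J5_act (D : T4) : J5 (act g D) = J5 D := by
  rw [J5, J5, d2_act hg, sum_conj_mul_act_mul_conj hg]

theorem J6_act (D : T4) : J6 (act g D) = J6 D := by
  rw [J6, J6, d2_act hg, conj_mul_conj hg, conj_mul_conj hg, trace_conj hg]

theorem J7_act (D : T4) : J7 (act g D) = J7 D := by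
  rw [J7, J7, d2_act hg, conj_mul_conj hg, sum_conj_mul_act_mul_conj hg]

end Orthogonal

def RotEquiv (D D' : T4) : Prop := ∃ h : Mat3, IsSO3 h ∧ D' = act h D

theorem RotEquiv.refl (D : T4) : RotEquiv D D := ⟨1, isSO3_one, (act_one D).symm⟩

theorem RotEquiv.symm {D D' : T4} : RotEquiv D D' → RotEquiv D' D := by
  rintro ⟨h, hh, rfl⟩
  exact ⟨hᵀ, hh.transpose, by rw [← act_mul, hh.transpose_mul_self, act_one]⟩

theorem RotEquiv.trans {D D' D'' : T4} : RotEquiv D D' → RotEquiv D' D'' → RotEquiv D D'' := by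
  rintro ⟨h, hh, rfl⟩ ⟨h', hh', rfl⟩
  exact ⟨h' * h, hh'.mul hh, (act_mul h' h D).symm⟩

theorem rotEquiv_act {g : Mat3} (hg : IsSO3 g) (D : T4) : RotEquiv D (act g D) := ⟨g, hg, rfl⟩

def pairTensor (A B : Mat3) : T4 := fun i j k l =>
  if i = j ∧ k = l then A i k
  else if i = k ∧ j = l ∨ i = l ∧ j = k then B i j
  else 0

theorem pairTensor_apply_self_self (A B : Mat3) (i k : Fin 3) :
    pairTensor A B i i k k = A i k := by
  simp [pairTensor]

theorem contract_pairTensor (A B A' B' : Mat3) :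
    contract (pairTensor A B) (pairTensor A' B') = pairTensor (A * A') (B ⊙ (B' + B'ᵀ)) := by
  funext i j k l
  fin_cases i <;> fin_cases j <;> fin_cases k <;> fin_cases l <;>
    simp [contract, pairTensor, Fin.sum_univ_three, mul_apply] <;> ring

theorem partialTrace_pairTensor (A B : Mat3) :
    partialTrace (pairTensor A B) = diagonal fun j => A j j - B j j + ∑ i, B i j := by
  ext j l
  fin_cases j <;> fin_cases l <;> simp [partialTrace, pairTensor, Fin.sum_univ_three] <;> ring

theorem sum_diagonal_mul_mul_diagonal (a b : Fin 3 → ℝ) (T : T4) :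
    ∑ i, ∑ j, ∑ k, ∑ l, diagonal a i j * T i j k l * diagonal b k l
      = ∑ i, ∑ k, a i * T i i k k * b k := by
  simp [diagonal_apply]

def orthMat (l1 l2 l3 : ℝ) : Mat3 := !![-l2 - l3, l3, l2; l3, -l1 - l3, l1; l2, l1, -l1 - l2]

theorem NForth_eq_pairTensor (l1 l2 l3 : ℝ) :
    NForth l1 l2 l3 = pairTensor (orthMat l1 l2 l3) (orthMat l1 l2 l3) := by
  funext i j k l
  fin_cases i <;> fin_cases j <;> fin_cases k <;> fin_cases l <;>
    simp +decide [NForth, symT, pairTensor, orthMat]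

section NormalForm

variable (l1 l2 l3 : ℝ)

theorem d2_NForth : d2 (NForth l1 l2 l3) = diagonal ![
    4 * l2 ^ 2 + 2 * l2 * l3 + 4 * l3 ^ 2,
    4 * l1 ^ 2 + 2 * l1 * l3 + 4 * l3 ^ 2,
    4 * l1 ^ 2 + 2 * l1 * l2 + 4 * l2 ^ 2] := by
  rw [d2_eq_partialTrace_contract, NForth_eq_pairTensor, contract_pairTensor,
    partialTrace_pairTensor]
  congr 1
  funext j
  fin_cases j <;> simp [orthMat, Fin.sum_univ_three, mul_apply] <;> ring

theorem J2_NForth :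
    J2 (NForth l1 l2 l3) = 8 * (l1 + l2 + l3) ^ 2 - 14 * (l1 * l2 + l1 * l3 + l2 * l3) := by
  rw [J2, d2_NForth]
  simp only [trace, diag_apply, diagonal_apply_eq, Fin.sum_univ_three,
    cons_val_zero, cons_val_one, cons_val_two, head_cons, tail_cons]
  ring

theorem J3_NForth : J3 (NForth l1 l2 l3) =
    24 * (l1 * l2 * l3) - 6 * (l1 + l2 + l3) * (l1 * l2 + l1 * l3 + l2 * l3) := by
  rw [J3, d3_eq_partialTrace_contract, NForth_eq_pairTensor, contract_pairTensor,
    contract_pairTensor, partialTrace_pairTensor]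
  simp only [trace, diag_apply, diagonal_apply_eq, Fin.sum_univ_three,
    mul_apply, hadamard_apply, Matrix.add_apply, transpose_apply, orthMat,
    of_apply, cons_val', cons_val_zero, cons_val_one, cons_val_two,
    head_cons, tail_cons, cons_val_fin_one, head_fin_const]
  ring

theorem discr_NForth :
    6 * J6 (NForth l1 l2 l3) - 9 * J2 (NForth l1 l2 l3) * J4 (NForth l1 l2 l3)
      - 20 * J3 (NForth l1 l2 l3) ^ 2 + 3 * J2 (NForth l1 l2 l3) ^ 3
      = 432 * ((l1 - l2) * (l1 - l3) * (l2 - l3)) ^ 2 := by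
  rw [J6, J4, J2_NForth, J3_NForth, d2_NForth]
  simp only [trace, diag_apply, diagonal_mul_diagonal, diagonal_apply_eq,
    Fin.sum_univ_three, cons_val_zero, cons_val_one, cons_val_two,
    head_cons, tail_cons]
  ring

theorem J7_combination_NForth :
    J2 (NForth l1 l2 l3) ^ 2 * J3 (NForth l1 l2 l3)
      + 3 * J2 (NForth l1 l2 l3) * J5 (NForth l1 l2 l3)
      - 3 * J3 (NForth l1 l2 l3) * J4 (NForth l1 l2 l3) - 3 * J7 (NForth l1 l2 l3)
      = 96 * (l1 + l2 + l3) * ((l1 - l2) * (l1 - l3) * (l2 - l3)) ^ 2 := by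
  rw [J5, J7, J4, J2_NForth, J3_NForth, d2_NForth, diagonal_mul_diagonal,
    sum_diagonal_mul_mul_diagonal, sum_diagonal_mul_mul_diagonal, NForth_eq_pairTensor]
  simp only [trace, diag_apply, diagonal_apply_eq, pairTensor_apply_self_self,
    Fin.sum_univ_three, orthMat, of_apply, cons_val', cons_val_zero,
    cons_val_one, cons_val_two, head_cons, tail_cons, cons_val_fin_one, head_fin_const]
  ring

end NormalForm

theorem rotEquiv_NForth_cycle (l1 l2 l3 : ℝ) : RotEquiv (NForth l1 l2 l3) (NForth l2 l3 l1) := by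
  refine ⟨!![0, 1, 0; 0, 0, 1; 1, 0, 0], ⟨?_, by simp [det_fin_three]⟩, ?_⟩
  · ext i j
    fin_cases i <;> fin_cases j <;> simp [mul_apply, Fin.sum_univ_three]
  · rw [NForth_eq_pairTensor, NForth_eq_pairTensor]
    funext i j k l
    fin_cases i <;> fin_cases j <;> fin_cases k <;> fin_cases l <;>
      simp [act, pairTensor, orthMat, Fin.sum_univ_three, sub_eq_add_neg, add_comm]

theorem rotEquiv_NForth_swap (l1 l2 l3 : ℝ) : RotEquiv (NForth l1 l2 l3) (NForth l1 l3 l2) := by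
  refine ⟨!![-1, 0, 0; 0, 0, 1; 0, 1, 0], ⟨?_, by simp [det_fin_three]⟩, ?_⟩
  · ext i j
    fin_cases i <;> fin_cases j <;> simp [mul_apply, Fin.sum_univ_three]
  · rw [NForth_eq_pairTensor, NForth_eq_pairTensor]
    funext i j k l
    fin_cases i <;> fin_cases j <;> fin_cases k <;> fin_cases l <;>
      simp [act, pairTensor, orthMat, Fin.sum_univ_three, sub_eq_add_neg, add_comm]

section SymmetricFunctions

variable {l1 l2 l3 m1 m2 m3 : ℝ}

theorem rotEquiv_NForth_of_eq_of_esymm_eq (he : m1 = l1) (h1 : m1 + m2 + m3 = l1 + l2 + l3)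
    (h2 : m1 * m2 + m1 * m3 + m2 * m3 = l1 * l2 + l1 * l3 + l2 * l3) :
    RotEquiv (NForth l1 l2 l3) (NForth m1 m2 m3) := by
  subst he
  have hs : m2 + m3 = l2 + l3 := by linarith
  have hp : m2 * m3 = l2 * l3 := by linear_combination h2 - m1 * hs
  have hroot : (m2 - l2) * (m2 - l3) = 0 := by linear_combination m2 * hs - hp
  rcases mul_eq_zero.1 hroot with h | h
  · obtain rfl : m2 = l2 := by linarith
    obtain rfl : m3 = l3 := by linarith
    exact RotEquiv.refl _
  · obtain rfl : m2 = l3 := by linarith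
    obtain rfl : m3 = l2 := by linarith
    exact rotEquiv_NForth_swap _ _ _

theorem rotEquiv_NForth_of_esymm_eq (h1 : m1 + m2 + m3 = l1 + l2 + l3)
    (h2 : m1 * m2 + m1 * m3 + m2 * m3 = l1 * l2 + l1 * l3 + l2 * l3)
    (h3 : m1 * m2 * m3 = l1 * l2 * l3) :
    RotEquiv (NForth l1 l2 l3) (NForth m1 m2 m3) := by
  -- `∏ (x - lᵢ)` and `∏ (x - mᵢ)` have the same coefficients, so `m₁` is a root of both.
  have hroot : (m1 - l1) * (m1 - l2) * (m1 - l3) = 0 := by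
    linear_combination m1 ^ 2 * h1 - m1 * h2 + h3
  rcases mul_eq_zero.1 hroot with h | h
  · rcases mul_eq_zero.1 h with h | h
    · exact rotEquiv_NForth_of_eq_of_esymm_eq (by linarith) h1 h2
    · exact (rotEquiv_NForth_cycle l1 l2 l3).trans
        (rotEquiv_NForth_of_eq_of_esymm_eq (by linarith) (by linarith) (by linarith))
  · exact ((rotEquiv_NForth_cycle l1 l2 l3).trans (rotEquiv_NForth_cycle l2 l3 l1)).trans
      (rotEquiv_NForth_of_eq_of_esymm_eq (by linarith) (by linarith) (by linarith))

theorem esymm_eq_of_invariants_NForth_eq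
    (hΔ : (l1 - l2) * (l1 - l3) * (l2 - l3) ≠ 0)
    (h2 : J2 (NForth l1 l2 l3) = J2 (NForth m1 m2 m3))
    (h3 : J3 (NForth l1 l2 l3) = J3 (NForth m1 m2 m3))
    (h4 : J4 (NForth l1 l2 l3) = J4 (NForth m1 m2 m3))
    (h5 : J5 (NForth l1 l2 l3) = J5 (NForth m1 m2 m3))
    (h6 : J6 (NForth l1 l2 l3) = J6 (NForth m1 m2 m3))
    (h7 : J7 (NForth l1 l2 l3) = J7 (NForth m1 m2 m3)) :
    m1 + m2 + m3 = l1 + l2 + l3 ∧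
      m1 * m2 + m1 * m3 + m2 * m3 = l1 * l2 + l1 * l3 + l2 * l3 ∧
      m1 * m2 * m3 = l1 * l2 * l3 := by
  have hΔsq :
      ((m1 - m2) * (m1 - m3) * (m2 - m3)) ^ 2 = ((l1 - l2) * (l1 - l3) * (l2 - l3)) ^ 2 := by
    have h := discr_NForth m1 m2 m3
    rw [← h2, ← h3, ← h4, ← h6, discr_NForth] at h
    linarith
  have hσ1 : m1 + m2 + m3 = l1 + l2 + l3 := by
    have h := J7_combination_NForth m1 m2 m3
    rw [← h2, ← h3, ← h4, ← h5, ← h7, J7_combination_NForth, hΔsq] at h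
    linarith [mul_right_cancel₀ (pow_ne_zero 2 hΔ) h]
  rw [J2_NForth, J2_NForth] at h2
  rw [J3_NForth, J3_NForth] at h3
  have hσ2 : m1 * m2 + m1 * m3 + m2 * m3 = l1 * l2 + l1 * l3 + l2 * l3 := by
    linear_combination (h2 + 8 * (m1 + m2 + m3 + l1 + l2 + l3) * hσ1) / 14
  refine ⟨hσ1, hσ2, ?_⟩
  linear_combination
    (-h3 + 6 * (l1 * l2 + l1 * l3 + l2 * l3) * hσ1 + 6 * (m1 + m2 + m3) * hσ2) / 24

end SymmetricFunctions

theorem invariants_separate_orbits_orthotropic_general (D D' : T4)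
    (hstrat : ∃ (g : Mat3) (l1 l2 l3 : ℝ), IsSO3 g ∧ act g D = NForth l1 l2 l3)
    (hstrat' : ∃ (g' : Mat3) (l1' l2' l3' : ℝ), IsSO3 g' ∧ act g' D' = NForth l1' l2' l3')
    (hgen : 6 * J6 D - 9 * J2 D * J4 D - 20 * (J3 D) ^ 2 + 3 * (J2 D) ^ 3 ≠ 0)
    (hJ : J2 D = J2 D' ∧ J3 D = J3 D' ∧ J4 D = J4 D' ∧ J5 D = J5 D' ∧
          J6 D = J6 D' ∧ J7 D = J7 D') :
    ∃ h : Mat3, IsSO3 h ∧ D' = act h D := by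
  obtain ⟨g, l1, l2, l3, hg, hgD⟩ := hstrat
  obtain ⟨g', m1, m2, m3, hg', hgD'⟩ := hstrat'
  obtain ⟨hJ2, hJ3, hJ4, hJ5, hJ6, hJ7⟩ := hJ
  have hinv := hg.transpose_mul_self
  have hinv' := hg'.transpose_mul_self
  have hΔ : (l1 - l2) * (l1 - l3) * (l2 - l3) ≠ 0 := by
    rw [← J2_act hinv, ← J3_act hinv, ← J4_act hinv, ← J6_act hinv, hgD,
      discr_NForth] at hgen
    exact fun h => hgen (by rw [h]; ring)
  obtain ⟨hσ1, hσ2, hσ3⟩ :=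
    esymm_eq_of_invariants_NForth_eq (m1 := m1) (m2 := m2) (m3 := m3) hΔ
      (by rw [← hgD, ← hgD', J2_act hinv, J2_act hinv', hJ2])
      (by rw [← hgD, ← hgD', J3_act hinv, J3_act hinv', hJ3])
      (by rw [← hgD, ← hgD', J4_act hinv, J4_act hinv', hJ4])
      (by rw [← hgD, ← hgD', J5_act hinv, J5_act hinv', hJ5])
      (by rw [← hgD, ← hgD', J6_act hinv, J6_act hinv', hJ6])
      (by rw [← hgD, ← hgD', J7_act hinv, J7_act hinv', hJ7])
  have hnf := rotEquiv_NForth_of_esymm_eq hσ1 hσ2 hσ3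
  rw [← hgD, ← hgD'] at hnf
  exact ((rotEquiv_act hg D).trans hnf).trans (rotEquiv_act hg' D').symm

/-- the invariants `J₂,…,J₇` separate the `SO(3)`-orbits inside the
orthotropic class of `H⁴` (under the genericity condition
`6J₆ − 9J₂J₄ − 20J₃² + 3J₂³ ≠ 0` for both tensors). -/
theorem invariants_separate_orbits_orthotropic (D D' : T4)
    (hD : IsHarm D) (hD' : IsHarm D')
    (hstrat : ∃ (g : Mat3) (l1 l2 l3 : ℝ), IsSO3 g ∧ act g D = NForth l1 l2 l3)
    (hstrat' : ∃ (g' : Mat3) (l1' l2' l3' : ℝ), IsSO3 g' ∧ act g' D' = NForth l1' l2' l3')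
    (hgen : 6 * J6 D - 9 * J2 D * J4 D - 20 * (J3 D) ^ 2 + 3 * (J2 D) ^ 3 ≠ 0)
    (hgen' : 6 * J6 D' - 9 * J2 D' * J4 D' - 20 * (J3 D') ^ 2 + 3 * (J2 D') ^ 3 ≠ 0)
    (hJ : J2 D = J2 D' ∧ J3 D = J3 D' ∧ J4 D = J4 D' ∧ J5 D = J5 D' ∧
          J6 D = J6 D' ∧ J7 D = J7 D') :
    ∃ h : Mat3, IsSO3 h ∧ D' = act h D :=
  invariants_separate_orbits_orthotropic_general D D' hstrat hstrat' hgen hJ
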